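/- Fix x ∈ ℝ^n and γ > 0. If x itself is a global minimizer of u ↦ ψ_γ(x, ∇f(x), u) (equivalently, P_γ(x, ∇f(x)) = 0), then x is a first-order critical point of the composite problem minimize f + h∘c: there exists p ∈ ℝ^q such that h(z) ≥ h(c(x)) + ⟨p, z − c(x)⟩ for all z ∈ ℝ^q (i.e. p is a subgradient of h at c(x)) and ∇f(x) + J(x)*p = 0, where J(x)* denotes the adjoint of J(x). -/

import Mathlib

/-!
Since ψ_γ(x, ∇f(x), ·) is convex and its quadratic term is of second order at x, minimality of x
means that v ↦ ⟪∇f(x), v⟫ + h(c(x) + J(x) v) is minimal at 0, i.e. -∇f(x) is a subgradient at 0 of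
h(c(x) + J(x) ·). The chain rule for subgradients of the continuous convex function h turns this
into -∇f(x) = J(x)* p with p ∈ ∂h(c(x)). It comes from separating the open strict epigraph of h
from the affine set {(c(x) + J(x) v, h(c(x)) - ⟪∇f(x), v⟫)}: the separating functional vanishes
along that set and is non-vertical, so it normalises to (z, r) ↦ ⟪p, z⟫ - r.
-/

open scoped RealInnerProductSpace
open Set Filter Topology

theorem ConvexOn.le_of_forall_le_add_mul_norm_sq {E : Type*} [SeminormedAddCommGroup E]
    [NormedSpace ℝ E] {f : E → ℝ} (hf : ConvexOn ℝ univ f) {x₀ : E} {C : ℝ}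
    (hle : ∀ y, f x₀ ≤ f y + C * ‖y - x₀‖ ^ 2) (y : E) : f x₀ ≤ f y := by
  have hsmall : ∀ t ∈ Ioo (0 : ℝ) 1, f x₀ - f y ≤ t * (C * ‖y - x₀‖ ^ 2) := by
    rintro t ⟨ht0, ht1⟩
    have hconv := hf.2 (mem_univ x₀) (mem_univ y) (sub_nonneg.2 ht1.le) ht0.le (by ring)
    have hquad := hle ((1 - t) • x₀ + t • y)
    have hdiff : (1 - t) • x₀ + t • y - x₀ = t • (y - x₀) := by module
    rw [hdiff, norm_smul, Real.norm_of_nonneg ht0.le] at hquad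
    simp only [smul_eq_mul] at hconv
    nlinarith
  have hlim : Tendsto (fun t : ℝ => t * (C * ‖y - x₀‖ ^ 2)) (𝓝[>] 0) (𝓝 0) := by
    simpa using ((tendsto_id (x := 𝓝 (0 : ℝ))).mul_const (C * ‖y - x₀‖ ^ 2)).mono_left
      (nhdsWithin_le_nhds (s := Ioi 0))
  have hdiff_le := ge_of_tendsto hlim (eventually_of_mem (Ioo_mem_nhdsGT one_pos) hsmall)
  linarith

section

variable {E F : Type*} [NormedAddCommGroup E] [InnerProductSpace ℝ E]
  [NormedAddCommGroup F] [InnerProductSpace ℝ F]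

theorem ConvexOn.exists_separating_strictEpigraph_of_le_comp {h : F → ℝ}
    (hconv : ConvexOn ℝ univ h) (hcont : Continuous h) (K : E →L[ℝ] F) (y : F) (w : E)
    (hw : ∀ v, h y + ⟪w, v⟫ ≤ h (y + K v)) :
    ∃ ℓ : StrongDual ℝ (F × ℝ), (∀ q : F × ℝ, h q.1 < q.2 → ℓ q < ℓ (y, h y)) ∧
      ∀ v, ℓ (K v, ⟪w, v⟫) = 0 := by
  set L : E →L[ℝ] F × ℝ := K.prod (innerSL ℝ w)
  have hL : ∀ v, L v = (K v, ⟪w, v⟫) := fun v => rfl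
  have hopen : IsOpen {q : F × ℝ | h q.1 < q.2} :=
    isOpen_lt (hcont.comp continuous_fst) continuous_snd
  have hconvA : Convex ℝ {q : F × ℝ | h q.1 < q.2} := by
    simpa using hconv.convex_strict_epigraph
  have hconvB : Convex ℝ ((fun b => (y, h y) + b) '' (L '' univ)) :=
    (convex_univ.linear_image L.toLinearMap).translate _
  have hdisj : Disjoint {q : F × ℝ | h q.1 < q.2} ((fun b => (y, h y) + b) '' (L '' univ)) := by
    rw [disjoint_right]
    rintro _ ⟨_, ⟨v, -, rfl⟩, rfl⟩
    simpa [hL] using hw v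
  obtain ⟨ℓ, u, hA, hB⟩ := geometric_hahn_banach_open hconvA hopen hconvB hdisj
  have hB' : ∀ v, u ≤ ℓ (y, h y) + ℓ (L v) := fun v => by
    simpa using hB _ ⟨L v, ⟨v, trivial, rfl⟩, rfl⟩
  have hu : u ≤ ℓ (y, h y) := by simpa using hB' 0
  refine ⟨ℓ, fun q hq => (hA q hq).trans_le hu, fun v => ?_⟩
  -- `ℓ ∘ L` is a linear functional bounded below, hence zero.
  by_contra hne
  have hbelow := hB' (((u - ℓ (y, h y) - 1) / ℓ (L v)) • v)
  rw [map_smul, map_smul, smul_eq_mul, div_mul_cancel₀ _ (by simpa [hL] using hne)] at hbelow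
  linarith

theorem ConvexOn.exists_subgradient_adjoint_eq_of_le_comp [CompleteSpace E] [CompleteSpace F]
    {h : F → ℝ} (hconv : ConvexOn ℝ univ h) (hcont : Continuous h) (K : E →L[ℝ] F) (y : F)
    (w : E) (hw : ∀ v, h y + ⟪w, v⟫ ≤ h (y + K v)) :
    ∃ p : F, (∀ z, h y + ⟪p, z - y⟫ ≤ h z) ∧ K.adjoint p = w := by
  obtain ⟨ℓ, hepi, hrange⟩ := hconv.exists_separating_strictEpigraph_of_le_comp hcont K y w hw
  set a : F := (InnerProductSpace.toDual ℝ F).symm (ℓ.comp (.inl ℝ F ℝ))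
  set b : ℝ := -ℓ (0, 1)
  have hℓ : ∀ z r, ℓ (z, r) = ⟪a, z⟫ - r * b := fun z r => by
    have hzr : (z, r) = (z, (0 : ℝ)) + r • ((0 : F), (1 : ℝ)) := by simp
    rw [hzr, map_add, map_smul, InnerProductSpace.toDual_symm_apply]
    simp [b, sub_eq_add_neg]
  have hb : 0 < b := by
    have hvert := hepi (y, h y + 1) (by simp)
    rw [hℓ, hℓ] at hvert
    linarith
  refine ⟨b⁻¹ • a, fun z => le_of_forall_gt_imp_ge_of_dense fun r hr => ?_, ?_⟩
  · have hzr := hepi (z, r) hr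
    rw [hℓ, hℓ] at hzr
    have hscaled : b⁻¹ * ⟪a, z - y⟫ ≤ r - h y := by
      rw [inv_mul_le_iff₀ hb, inner_sub_right]
      linarith
    rw [real_inner_smul_left]
    linarith
  · refine ext_inner_right ℝ fun v => ?_
    have hv := hrange v
    rw [hℓ] at hv
    rw [ContinuousLinearMap.adjoint_inner_left, real_inner_smul_left]
    field_simp
    linarith

end

theorem stmt_8 {n q : ℕ}
    (gradf : EuclideanSpace ℝ (Fin n) → EuclideanSpace ℝ (Fin n))
    (c : EuclideanSpace ℝ (Fin n) → EuclideanSpace ℝ (Fin q))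
    (J : EuclideanSpace ℝ (Fin n) → EuclideanSpace ℝ (Fin n) →L[ℝ] EuclideanSpace ℝ (Fin q))
    (h : EuclideanSpace ℝ (Fin q) → ℝ)
    (hconv : ConvexOn ℝ Set.univ h)
    (x : EuclideanSpace ℝ (Fin n)) (γ : ℝ)
    -- x itself is a global minimizer of u ↦ ψ_γ(x, ∇f(x), u):
    (hmin : ∀ u, ⟪gradf x, x - x⟫ + h (c x + J x (x - x)) + ‖x - x‖ ^ 2 / (2 * γ) ≤
      ⟪gradf x, u - x⟫ + h (c x + J x (u - x)) + ‖u - x‖ ^ 2 / (2 * γ)) :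
    ∃ p : EuclideanSpace ℝ (Fin q),
      (∀ z, h (c x) + ⟪p, z - c x⟫ ≤ h z) ∧
        gradf x + ContinuousLinearMap.adjoint (J x) p = 0 := by
  set φ : EuclideanSpace ℝ (Fin n) → ℝ := fun v => ⟪gradf x, v⟫ + h (c x + J x v)
  have hφ : ConvexOn ℝ univ φ :=
    ((innerSL ℝ (gradf x)).toLinearMap.convexOn convex_univ).add
      ((hconv.translate_right (c x)).comp_linearMap (J x).toLinearMap)
  have hquad : ∀ v, φ 0 ≤ φ v + (2 * γ)⁻¹ * ‖v - 0‖ ^ 2 := fun v => by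
    simpa [φ, div_eq_inv_mul] using hmin (x + v)
  obtain ⟨p, hsub, hadj⟩ := hconv.exists_subgradient_adjoint_eq_of_le_comp
    hconv.locallyLipschitz.continuous (J x) (c x) (-gradf x) fun v => by
      have hmin₀ := hφ.le_of_forall_le_add_mul_norm_sq hquad v
      simp only [φ, inner_zero_right, map_zero, add_zero, zero_add] at hmin₀
      rw [inner_neg_left]
      linarith
  exact ⟨p, hsub, by rw [hadj, add_neg_cancel]⟩
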